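/- arXiv:1809.10193 — 5 statements merged into one kernel-verified Lean document; each statement's English description precedes it below -/
import Mathlib

section
/- The classical Sharpe ratio S(X) = E[X]/√(Var X) is not monotone: there exist random variables X, Y with Y ≤ X almost surely but S(Y) > S(X). In particular, if X is standard normal plus 1 (mean 1, variance 1) and Y = min(X, 1), then S(X) = 1 while S(Y) > 1. -/
open MeasureTheory ProbabilityTheory

/-!
Write `Y = min X 1 = 1 - Z⁺` with `Z = 1 - X ~ N(0,1)`. Then `E[Z⁺] = c := 1/√(2π)` and,
by the symmetry of `Z`, `E[(Z⁺)²] = E[Z²]/2 = 1/2`, so `S(Y) = (1 - c)/√(1/2 - c²)`. This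
exceeds `S(X) = 1` because `(1 - c)² - (1/2 - c²) = 2(c - 1/2)² > 0`.
-/

open Real Set
open scoped NNReal

lemma integral_Ioi_mul_exp_neg_mul_sq {b : ℝ} (hb : 0 < b) :
    ∫ x in Ioi (0 : ℝ), x * exp (-b * x ^ 2) = (2 * b)⁻¹ := by
  have h := integral_mul_cexp_neg_mul_sq (b := (b : ℂ)) (by simpa using hb)
  have hcast : ∀ r : ℝ, (r : ℂ) * Complex.exp (-(b : ℂ) * (r : ℂ) ^ 2)
      = ((r * exp (-b * r ^ 2) : ℝ) : ℂ) := fun r => by push_cast; ring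
  simp_rw [hcast] at h
  rw [integral_complex_ofReal] at h
  exact_mod_cast h

section CenteredGaussian

variable (v : ℝ≥0)

lemma gaussianReal_zero_map_neg : (gaussianReal 0 v).map (fun x ↦ -x) = gaussianReal 0 v := by
  simpa using gaussianReal_map_neg (μ := 0) (v := v)

lemma integral_max_zero_gaussianReal : ∫ x, max x 0 ∂gaussianReal 0 v = √(v / (2 * π)) := by
  rcases eq_or_ne v 0 with rfl | hv
  · simp [gaussianReal_zero_var]
  have hv' : (0 : ℝ) < v := by positivity
  have hpdf : ∀ x ∈ Ioi (0 : ℝ), gaussianPDFReal 0 v x • max x 0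
      = (√(2 * π * v))⁻¹ * (x * exp (-(2 * v : ℝ)⁻¹ * x ^ 2)) := fun x hx => by
    rw [gaussianPDFReal, smul_eq_mul, max_eq_left (le_of_lt hx), sub_zero]
    ring_nf
  rw [integral_gaussianReal_eq_integral_smul hv,
    ← setIntegral_eq_integral_of_forall_compl_eq_zero (s := Ioi 0)
      fun x hx => by simp [max_eq_right (not_lt.mp hx : x ≤ 0)],
    setIntegral_congr_fun measurableSet_Ioi hpdf, integral_const_mul,
    integral_Ioi_mul_exp_neg_mul_sq (by positivity)]
  rw [sqrt_div' _ (by positivity), sqrt_mul' _ hv'.le]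
  field_simp
  exact (sq_sqrt hv'.le).symm

lemma integral_sq_max_zero_gaussianReal : ∫ x, (max x 0) ^ 2 ∂gaussianReal 0 v = v / 2 := by
  have hsq : ∫ x, x ^ 2 ∂gaussianReal 0 v = v := by
    have h := variance_id_gaussianReal (μ := 0) (v := v)
    rw [variance_eq_sub (memLp_id_gaussianReal 2)] at h
    simpa [integral_id_gaussianReal] using h
  have hint : Integrable (fun x ↦ (max x 0) ^ 2) (gaussianReal 0 v) :=
    (memLp_id_gaussianReal 2).pos_part.integrable_sq
  have hint_neg : Integrable (fun x ↦ (max (-x) 0) ^ 2) (gaussianReal 0 v) :=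
    (memLp_id_gaussianReal 2).neg.pos_part.integrable_sq
  have hsymm :
      ∫ x, (max (-x) 0) ^ 2 ∂gaussianReal 0 v = ∫ x, (max x 0) ^ 2 ∂gaussianReal 0 v := by
    conv_rhs => rw [← gaussianReal_zero_map_neg]
    rw [integral_map (by fun_prop) (by fun_prop)]
  have hsplit : (fun x : ℝ ↦ x ^ 2) = fun x ↦ (max x 0) ^ 2 + (max (-x) 0) ^ 2 := by
    funext x
    rcases le_total x 0 with h | h <;> simp [h]
  rw [hsplit, integral_add hint hint_neg, hsymm] at hsq
  linarith

lemma variance_max_zero_gaussianReal :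
    Var[fun x ↦ max x 0; gaussianReal 0 v] = v / 2 - v / (2 * π) := by
  have hZ : MemLp (fun x ↦ max x 0) 2 (gaussianReal 0 v) := (memLp_id_gaussianReal 2).pos_part
  rw [variance_eq_sub hZ]
  simp only [Pi.pow_apply]
  rw [integral_sq_max_zero_gaussianReal, integral_max_zero_gaussianReal, sq_sqrt (by positivity)]

end CenteredGaussian

section MinWithMean

variable (m : ℝ) (v : ℝ≥0)

lemma measurePreserving_const_sub_gaussianReal :
    MeasurePreserving (fun x ↦ m - x) (gaussianReal m v) (gaussianReal 0 v) :=
  ⟨by fun_prop, by simpa using gaussianReal_map_const_sub (μ := m) (v := v) m⟩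

lemma min_eq_sub_max_sub_zero (x : ℝ) : min x m = m - max (m - x) 0 := by
  rcases le_total x m with h | h
  · simp [h]
  · simp [h, sub_nonpos.mpr h]

lemma integral_min_gaussianReal : ∫ x, min x m ∂gaussianReal m v = m - √(v / (2 * π)) := by
  have hint : Integrable (fun x ↦ max (m - x) 0) (gaussianReal m v) :=
    ((memLp_const m).sub (memLp_id_gaussianReal 2)).pos_part.integrable one_le_two
  simp_rw [min_eq_sub_max_sub_zero m]
  rw [integral_sub (integrable_const m) hint, integral_const, ← integral_max_zero_gaussianReal,
    ← (measurePreserving_const_sub_gaussianReal m v).map_eq,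
    integral_map (by fun_prop) (by fun_prop)]
  simp

lemma variance_min_gaussianReal :
    Var[fun x ↦ min x m; gaussianReal m v] = v / 2 - v / (2 * π) := by
  simp_rw [min_eq_sub_max_sub_zero m]
  rw [variance_const_sub (by fun_prop) m,
    (measurePreserving_const_sub_gaussianReal m v).variance_fun_comp (f := fun z ↦ max z 0)
      (by fun_prop), variance_max_zero_gaussianReal]

end MinWithMean

lemma one_lt_one_sub_sqrt_div_sqrt {t : ℝ} (ht0 : 0 ≤ t) (ht : t < 1 / 4) :
    1 < (1 - √t) / √(1 / 2 - t) := by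
  have hs : √t < 1 / 2 := by
    rw [sqrt_lt' (by norm_num)]; linarith
  have hsq : √t ^ 2 = t := sq_sqrt ht0
  rw [lt_div_iff₀ (sqrt_pos.mpr (by linarith)), one_mul, sqrt_lt' (by linarith)]
  nlinarith [sq_pos_of_ne_zero (sub_ne_zero.mpr hs.ne)]

/-- The classical Sharpe ratio `S(X) = E[X]/√(Var X)` is not monotone: there are
`Y ≤ X` a.s. with `S(Y) > S(X)`. In particular, for `X ~ N(1,1)` (realized as the
identity on `(ℝ, gaussianReal 1 1)`) and `Y = min(X,1)`, one has `S(X) = 1` and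
`S(Y) > 1`. -/
theorem sharpe_not_monotone :
    (∃ (Ω : Type) (_ : MeasurableSpace Ω) (μ : Measure Ω) (_ : IsProbabilityMeasure μ)
      (X Y : Ω → ℝ), MemLp X 2 μ ∧ MemLp Y 2 μ ∧ (∀ᵐ ω ∂μ, Y ω ≤ X ω) ∧
        (∫ ω, X ω ∂μ) / Real.sqrt (variance X μ) <
          (∫ ω, Y ω ∂μ) / Real.sqrt (variance Y μ)) ∧
    (∫ x, x ∂(gaussianReal 1 1)) / Real.sqrt (variance id (gaussianReal 1 1)) = 1 ∧
    1 < (∫ x, min x 1 ∂(gaussianReal 1 1)) /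
        Real.sqrt (variance (fun x => min x 1) (gaussianReal 1 1)) := by
  have hSX : (∫ x, x ∂gaussianReal 1 1) / √(Var[id; gaussianReal 1 1]) = 1 := by
    simp [integral_id_gaussianReal, variance_id_gaussianReal]
  have hSY :
      1 < (∫ x, min x 1 ∂gaussianReal 1 1) / √(Var[fun x ↦ min x 1; gaussianReal 1 1]) := by
    rw [integral_min_gaussianReal, variance_min_gaussianReal, NNReal.coe_one]
    exact one_lt_one_sub_sqrt_div_sqrt (by positivity) (by
      rw [div_lt_div_iff₀ (by positivity) (by norm_num)]; linarith [pi_gt_three])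
  refine ⟨⟨ℝ, inferInstance, gaussianReal 1 1, inferInstance, id, fun x ↦ min x 1,
    memLp_id_gaussianReal 2, (memLp_id_gaussianReal 2).inf (memLp_const 1),
    ae_of_all _ fun x ↦ min_le_left x 1, hSX.trans_lt hSY⟩, hSX, hSY⟩
end

section
/- The monotone Sharpe ratio MSR_p is law invariant: if X and Y have the same distribution, then MSR_p(X) = MSR_p(Y). The key step is that for any Z ≤ X one may replace Z by E[Z | X], which satisfies E[Z|X] ≤ X, E[E[Z|X]] = E[Z], and σ_p(E[Z|X]) ≤ σ_p(Z). -/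
open MeasureTheory ENNReal

/-- The `L^p`-deviation: `σ_p(X) = inf_{c ∈ ℝ} ‖X - c‖_p`. -/
noncomputable def sigmaDev {Ω : Type*} [MeasurableSpace Ω] (p : ℝ≥0∞)
    (μ : Measure Ω) (X : Ω → ℝ) : ℝ≥0∞ :=
  ⨅ c : ℝ, eLpNorm (fun ω => X ω - c) p μ

/-- The monotone Sharpe ratio in `L^p`:
`MSR_p(X) = sup_{Z ≤ X a.s., Z ∈ L^p} E[Z] / σ_p(Z)`. -/
noncomputable def MSR {Ω : Type*} [MeasurableSpace Ω] (p : ℝ≥0∞)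
    (μ : Measure Ω) (X : Ω → ℝ) : ℝ≥0∞ :=
  ⨆ Z ∈ {Z : Ω → ℝ | MemLp Z p μ ∧ ∀ᵐ ω ∂μ, Z ω ≤ X ω},
    ENNReal.ofReal (∫ ω, Z ω ∂μ) / sigmaDev p μ Z

/-! Given `Z ≤ X`, the conditional expectation `E[Z | X]` is still dominated by `X`, has the same
mean and, by the conditional Jensen inequality, no larger `L^p`-deviation. Being `σ(X)`-measurable
it is `g ∘ X` for a Borel function `g`, so `g ∘ Y` is an admissible competitor for `Y` with the same
law as `g ∘ X`. Hence `MSR_p(X) ≤ MSR_p(Y)`, and the reverse inequality holds by symmetry. -/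

open ProbabilityTheory

lemma sigmaDev_condExp_le {Ω : Type*} {m m0 : MeasurableSpace Ω} {μ : Measure Ω}
    [IsFiniteMeasure μ] (hm : m ≤ m0) {p : ℝ≥0∞} (hp : 1 ≤ p) {Z : Ω → ℝ}
    (hZ : Integrable Z μ) :
    sigmaDev p μ (μ[Z|m]) ≤ sigmaDev p μ Z := by
  refine iInf_mono fun c => ?_
  have hshift : μ[fun ω => Z ω - c|m] =ᵐ[μ] fun ω => (μ[Z|m]) ω - c := by
    filter_upwards [condExp_sub hZ (integrable_const c) m] with ω hω
    rw [show (fun ω => Z ω - c) = Z - fun _ => c from rfl, hω, Pi.sub_apply,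
      condExp_const hm c]
  rw [← eLpNorm_congr_ae hshift]
  exact eLpNorm_condExp_le_eLpNorm _ hp

lemma ProbabilityTheory.IdentDistrib.sigmaDev_eq {Ω₁ Ω₂ : Type*} [MeasurableSpace Ω₁]
    [MeasurableSpace Ω₂] {μ₁ : Measure Ω₁} {μ₂ : Measure Ω₂} {Z₁ : Ω₁ → ℝ} {Z₂ : Ω₂ → ℝ}
    (h : IdentDistrib Z₁ Z₂ μ₁ μ₂) (p : ℝ≥0∞) :
    sigmaDev p μ₁ Z₁ = sigmaDev p μ₂ Z₂ :=
  iInf_congr fun c => (h.comp (measurable_id.sub_const c)).eLpNorm_eq p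

lemma condExp_le_of_ae_le {Ω : Type*} {m m0 : MeasurableSpace Ω} {μ : Measure Ω}
    (hm : m ≤ m0) [SigmaFinite (μ.trim hm)] {Z X : Ω → ℝ} (hZ : Integrable Z μ)
    (hX : Integrable X μ) (hXm : StronglyMeasurable[m] X) (hZX : Z ≤ᵐ[μ] X) :
    μ[Z|m] ≤ᵐ[μ] X := by
  simpa only [condExp_of_stronglyMeasurable hm hXm hX] using condExp_mono (m := m) hZ hX hZX

lemma exists_condExp_comap_eq_comp {Ω β : Type*} [MeasurableSpace Ω] [MeasurableSpace β]
    (μ : Measure Ω) (X : Ω → β) (Z : Ω → ℝ) :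
    ∃ g : β → ℝ, Measurable g ∧ μ[Z|MeasurableSpace.comap X inferInstance] = g ∘ X := by
  obtain ⟨g, hg, hgX⟩ := (stronglyMeasurable_condExp (μ := μ) (f := Z)
    (m := MeasurableSpace.comap X inferInstance)).exists_eq_measurable_comp
  exact ⟨g, hg.measurable, hgX⟩

lemma MSR_le_of_identDistrib {Ω₁ Ω₂ : Type*} [MeasurableSpace Ω₁] [MeasurableSpace Ω₂]
    {μ₁ : Measure Ω₁} [IsFiniteMeasure μ₁] {μ₂ : Measure Ω₂}
    {p : ℝ≥0∞} (hp : 1 ≤ p) {X : Ω₁ → ℝ} {Y : Ω₂ → ℝ} (hXm : Measurable X)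
    (hX : Integrable X μ₁) (hXY : IdentDistrib X Y μ₁ μ₂) :
    MSR p μ₁ X ≤ MSR p μ₂ Y := by
  refine iSup₂_le fun Z ⟨hZp, hZX⟩ => ?_
  have hm := hXm.comap_le
  have hZ := hZp.integrable hp
  obtain ⟨g, hg, hgX⟩ := exists_condExp_comap_eq_comp μ₁ X Z
  have hgXY : IdentDistrib (g ∘ X) (g ∘ Y) μ₁ μ₂ := hXY.comp hg
  have hgY_le : ∀ᵐ ω ∂μ₂, g (Y ω) ≤ Y ω := by
    refine hXY.ae_snd (p := fun x => g x ≤ x) (measurableSet_le hg measurable_id) ?_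
    have h := condExp_le_of_ae_le hm hZ hX (comap_measurable X).stronglyMeasurable hZX
    rwa [hgX] at h
  have hgY_memLp : MemLp (g ∘ Y) p μ₂ := hgXY.memLp_snd (hgX ▸ hZp.condExp hp)
  have hmean : ∫ ω, g (Y ω) ∂μ₂ = ∫ ω, Z ω ∂μ₁ := by
    rw [← integral_condExp hm, hgX]
    exact hgXY.integral_eq.symm
  have hdev : sigmaDev p μ₂ (g ∘ Y) ≤ sigmaDev p μ₁ Z := by
    rw [← hgXY.sigmaDev_eq, ← hgX]
    exact sigmaDev_condExp_le hm hp hZ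
  calc ENNReal.ofReal (∫ ω, Z ω ∂μ₁) / sigmaDev p μ₁ Z
      ≤ ENNReal.ofReal (∫ ω, (g ∘ Y) ω ∂μ₂) / sigmaDev p μ₂ (g ∘ Y) := by
        rw [Function.comp_def, hmean]
        exact ENNReal.div_le_div_left hdev _
    _ ≤ MSR p μ₂ Y :=
        le_iSup₂ (f := fun Z _ => ENNReal.ofReal (∫ ω, Z ω ∂μ₂) / sigmaDev p μ₂ Z)
          (g ∘ Y) ⟨hgY_memLp, hgY_le⟩

theorem MSR_law_invariant_general {Ω₁ Ω₂ : Type*} [MeasurableSpace Ω₁] [MeasurableSpace Ω₂]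
    (μ₁ : Measure Ω₁) [IsProbabilityMeasure μ₁]
    (μ₂ : Measure Ω₂) [IsProbabilityMeasure μ₂]
    (p : ℝ≥0∞) (hp : 1 ≤ p)
    (X : Ω₁ → ℝ) (Y : Ω₂ → ℝ) (hXm : Measurable X) (hYm : Measurable Y)
    (hX : MemLp X p μ₁) (hY : MemLp Y p μ₂)
    (hlaw : μ₁.map X = μ₂.map Y) :
    MSR p μ₁ X = MSR p μ₂ Y := by
  have hXY : IdentDistrib X Y μ₁ μ₂ := ⟨hXm.aemeasurable, hYm.aemeasurable, hlaw⟩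
  exact le_antisymm (MSR_le_of_identDistrib hp hXm (hX.integrable hp) hXY)
    (MSR_le_of_identDistrib hp hYm (hY.integrable hp) hXY.symm)

/-- The monotone Sharpe ratio is law invariant: if `X` and `Y` (possibly on
different probability spaces) have the same distribution, then
`MSR_p(X) = MSR_p(Y)`. -/
theorem MSR_law_invariant {Ω₁ Ω₂ : Type*} [MeasurableSpace Ω₁] [MeasurableSpace Ω₂]
    (μ₁ : Measure Ω₁) [IsProbabilityMeasure μ₁]
    (μ₂ : Measure Ω₂) [IsProbabilityMeasure μ₂]
    (p : ℝ≥0∞) (hp : 1 ≤ p) (hp' : p ≠ ∞)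
    (X : Ω₁ → ℝ) (Y : Ω₂ → ℝ) (hXm : Measurable X) (hYm : Measurable Y)
    (hX : MemLp X p μ₁) (hY : MemLp Y p μ₂)
    (hlaw : μ₁.map X = μ₂.map Y) :
    MSR p μ₁ X = MSR p μ₂ Y :=
  MSR_law_invariant_general μ₁ μ₂ p hp X Y hXm hYm hX hY hlaw
end

section
/- The function λ ↦ Q_p(X,λ) is non-decreasing on [0,1), and it is strictly increasing at any λ where Q_p(X,λ) < esssup X: if Q_p(X,λ) < esssup X and λ' < λ, then Q_p(X,λ') < Q_p(X,λ). -/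
/-!
Write `N c = ‖(X - c)₊‖_p` (`excessLpNorm`), so that `Q_p(X, λ) = inf_c ((1 - λ)⁻¹ N c + c)`.
Since `N ≥ 0` and `(1 - λ)⁻¹` increases with `λ`, so does every term of the infimum. Since `N c ≥ 𝔼 X - c`, the
infimum is bounded below and so finite. For strictness, pick `m` with `Q_p(X, λ) < m < esssup X`.
Then `N m > 0`, and every `c` that nearly attains `Q_p(X, λ)` lies below `m`, so `N c ≥ N m`.
Lowering `λ` to `λ'` therefore lowers the objective at such a `c` by at least
`((1 - λ)⁻¹ - (1 - λ')⁻¹) N m`, which is a fixed positive amount.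
-/

open MeasureTheory ENNReal

/-- The `L^p`-CVAR of `X` at level `λ ∈ [0,1)`:
`Q_p(X,λ) = inf_{c ∈ ℝ} ((1-λ)⁻¹ ‖(X-c)_+‖_p + c)`. -/
noncomputable def cvarLp {Ω : Type*} [MeasurableSpace Ω] (p : ℝ≥0∞)
    (μ : Measure Ω) (X : Ω → ℝ) (l : ℝ) : ℝ :=
  ⨅ c : ℝ, ((1 - l)⁻¹ * (eLpNorm (fun ω => max (X ω - c) 0) p μ).toReal + c)

section Objective

variable {N : ℝ → ℝ} {a a' b : ℝ}

lemma bddBelow_range_mul_add (hN : ∀ c, 0 ≤ N c) (hb : ∀ c, b - c ≤ N c) (ha : 1 ≤ a) :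
    BddBelow (Set.range fun c => a * N c + c) := by
  refine ⟨b, ?_⟩
  rintro _ ⟨c, rfl⟩
  nlinarith [hN c, hb c]

lemma ciInf_mul_add_mono (hN : ∀ c, 0 ≤ N c)
    (hbdd : BddBelow (Set.range fun c => a * N c + c)) (haa' : a ≤ a') :
    ⨅ c, (a * N c + c) ≤ ⨅ c, (a' * N c + c) :=
  ciInf_mono hbdd fun c => by nlinarith [hN c]

lemma ciInf_mul_add_lt_of_lt (hN : ∀ c, 0 ≤ N c) (hN_anti : Antitone N)
    (hbdd : BddBelow (Set.range fun c => a' * N c + c)) (ha' : 0 ≤ a') (haa' : a' < a)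
    {m : ℝ} (hm : ⨅ c, (a * N c + c) < m) (hNm : 0 < N m) :
    ⨅ c, (a' * N c + c) < ⨅ c, (a * N c + c) := by
  set Q := ⨅ c, (a * N c + c)
  set ε := min ((a - a') * N m) (m - Q)
  have hε : 0 < ε := lt_min (mul_pos (by linarith) hNm) (by linarith)
  obtain ⟨c, hc⟩ : ∃ c, a * N c + c < Q + ε := exists_lt_of_ciInf_lt (by linarith)
  have hcm : c ≤ m := by
    linarith [mul_nonneg (ha'.trans haa'.le) (hN c), min_le_right ((a - a') * N m) (m - Q)]
  have hgain : (a - a') * N m ≤ (a - a') * N c :=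
    mul_le_mul_of_nonneg_left (hN_anti hcm) (by linarith)
  calc ⨅ c, (a' * N c + c) ≤ a' * N c + c := ciInf_le hbdd c
    _ = (a * N c + c) - (a - a') * N c := by ring
    _ < Q + ε - (a - a') * N m := by linarith
    _ ≤ Q := by linarith [min_le_left ((a - a') * N m) (m - Q)]

end Objective

section ExcessNorm

variable {Ω : Type*} [MeasurableSpace Ω] {μ : Measure Ω} {p : ℝ≥0∞} {X : Ω → ℝ}

noncomputable def excessLpNorm (p : ℝ≥0∞) (μ : Measure Ω) (X : Ω → ℝ) (c : ℝ) : ℝ :=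
  (eLpNorm (fun ω => max (X ω - c) 0) p μ).toReal

lemma cvarLp_eq_iInf_excessLpNorm (l : ℝ) :
    cvarLp p μ X l = ⨅ c, ((1 - l)⁻¹ * excessLpNorm p μ X c + c) :=
  rfl

lemma excessLpNorm_nonneg (c : ℝ) : 0 ≤ excessLpNorm p μ X c :=
  toReal_nonneg

lemma MeasureTheory.MemLp.max_sub_const_zero [IsFiniteMeasure μ] (hX : MemLp X p μ) (c : ℝ) :
    MemLp (fun ω => max (X ω - c) 0) p μ :=
  (hX.sub (memLp_const c)).pos_part

lemma excessLpNorm_antitone [IsFiniteMeasure μ] (hX : MemLp X p μ) :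
    Antitone (excessLpNorm p μ X) := by
  intro c d hcd
  refine toReal_mono (hX.max_sub_const_zero c).eLpNorm_ne_top (eLpNorm_mono fun ω => ?_)
  rw [Real.norm_of_nonneg (le_max_right _ _), Real.norm_of_nonneg (le_max_right _ _)]
  exact max_le_max (by linarith) le_rfl

lemma integral_sub_le_excessLpNorm [IsProbabilityMeasure μ] (hp : 1 ≤ p) (hX : MemLp X p μ)
    (c : ℝ) : ∫ ω, X ω ∂μ - c ≤ excessLpNorm p μ X c := by
  have hXc := hX.max_sub_const_zero c
  have hX1 : Integrable X μ := hX.integrable hp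
  calc ∫ ω, X ω ∂μ - c = ∫ ω, (X ω - c) ∂μ := by
        rw [integral_sub hX1 (integrable_const c), integral_const, probReal_univ, one_smul]
    _ ≤ ∫ ω, ‖max (X ω - c) 0‖ ∂μ :=
        integral_mono (hX1.sub (integrable_const c)) (hXc.integrable hp).norm
          fun ω => (le_max_left _ _).trans (Real.le_norm_self _)
    _ = (eLpNorm (fun ω => max (X ω - c) 0) 1 μ).toReal := by
        rw [toReal_eLpNorm hXc.aestronglyMeasurable, lpNorm_one_eq_integral_norm
          hXc.aestronglyMeasurable]
    _ ≤ excessLpNorm p μ X c :=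
        toReal_mono hXc.eLpNorm_ne_top
          (eLpNorm_le_eLpNorm_of_exponent_le hp hXc.aestronglyMeasurable)

lemma excessLpNorm_pos_of_lt_essSup [IsFiniteMeasure μ] (hp : p ≠ 0) (hX : MemLp X p μ)
    {m : ℝ} (hm : (m : EReal) < essSup (fun ω => (X ω : EReal)) μ) :
    0 < excessLpNorm p μ X m := by
  have hXm := hX.max_sub_const_zero m
  refine toReal_pos (fun h0 => hm.not_ge (essSup_le_of_ae_le _ ?_)) hXm.eLpNorm_ne_top
  filter_upwards [(eLpNorm_eq_zero_iff hXm.aestronglyMeasurable hp).mp h0] with ω hω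
  have : X ω ≤ m := sub_nonpos.mp (max_eq_right_iff.mp hω)
  exact_mod_cast this

end ExcessNorm

lemma one_le_inv_one_sub {l : ℝ} (hl0 : 0 ≤ l) (hl1 : l < 1) : 1 ≤ (1 - l)⁻¹ :=
  one_le_inv₀ (by linarith) |>.mpr (by linarith)

theorem cvarLp_monotone_strict_general {Ω : Type*} [MeasurableSpace Ω]
    (μ : Measure Ω) [IsProbabilityMeasure μ]
    (p : ℝ≥0∞) (hp : 1 ≤ p)
    (X : Ω → ℝ) (hX : MemLp X p μ) :
    (∀ l l' : ℝ, 0 ≤ l → l ≤ l' → l' < 1 → cvarLp p μ X l ≤ cvarLp p μ X l') ∧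
    (∀ l l' : ℝ, 0 ≤ l' → l' < l → l < 1 →
      ((cvarLp p μ X l : EReal) < essSup (fun ω => (X ω : EReal)) μ) →
      cvarLp p μ X l' < cvarLp p μ X l) := by
  simp only [cvarLp_eq_iInf_excessLpNorm]
  have hbdd : ∀ l, 0 ≤ l → l < 1 →
      BddBelow (Set.range fun c => (1 - l)⁻¹ * excessLpNorm p μ X c + c) := fun l hl0 hl1 =>
    bddBelow_range_mul_add excessLpNorm_nonneg (integral_sub_le_excessLpNorm hp hX)
      (one_le_inv_one_sub hl0 hl1)
  refine ⟨fun l l' hl0 hll' hl'1 => ?_, fun l l' hl'0 hl'l hl1 hQ => ?_⟩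
  · exact ciInf_mul_add_mono excessLpNorm_nonneg (hbdd l hl0 (hll'.trans_lt hl'1))
      (inv_anti₀ (by linarith) (by linarith))
  · obtain ⟨m, hQm, hm⟩ := EReal.lt_iff_exists_real_btwn.mp hQ
    exact ciInf_mul_add_lt_of_lt excessLpNorm_nonneg (excessLpNorm_antitone hX)
      (hbdd l' hl'0 (hl'l.trans hl1)) (inv_nonneg.mpr (by linarith))
      (inv_strictAnti₀ (by linarith) (by linarith)) (EReal.coe_lt_coe_iff.mp hQm)
      (excessLpNorm_pos_of_lt_essSup (zero_lt_one.trans_le hp).ne' hX hm)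

/-- `λ ↦ Q_p(X,λ)` is non-decreasing on `[0,1)`, and strictly increasing at any
`λ` with `Q_p(X,λ) < esssup X`: if `Q_p(X,λ) < esssup X` and `λ' < λ`, then
`Q_p(X,λ') < Q_p(X,λ)`. -/
theorem cvarLp_monotone_strict {Ω : Type*} [MeasurableSpace Ω]
    (μ : Measure Ω) [IsProbabilityMeasure μ]
    (p : ℝ≥0∞) (hp : 1 ≤ p) (hp' : p ≠ ∞)
    (X : Ω → ℝ) (hX : MemLp X p μ) :
    (∀ l l' : ℝ, 0 ≤ l → l ≤ l' → l' < 1 → cvarLp p μ X l ≤ cvarLp p μ X l') ∧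
    (∀ l l' : ℝ, 0 ≤ l' → l' < l → l < 1 →
      ((cvarLp p μ X l : EReal) < essSup (fun ω => (X ω : EReal)) μ) →
      cvarLp p μ X l' < cvarLp p μ X l) :=
  cvarLp_monotone_strict_general μ p hp X hX
end

section
/- If P := P(X = esssup X) > 0 (in particular esssup X < ∞), then Q_p(X,λ) = esssup X for all λ ∈ [1 - P^{1/p}, 1). -/
open MeasureTheory ENNReal

/-! For `c ≥ M` the objective `(1 - λ)⁻¹ ‖(X - c)_+‖_p + c` is at least `c ≥ M`. For `c < M`,
Chebyshev's inequality on the atom `{X = M}`, where `(X - c)_+ = M - c`, gives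
`‖(X - c)_+‖_p ≥ (M - c) P^{1/p} ≥ (M - c)(1 - λ)`, so the objective is again at least `M`.
At `c = M` the positive part vanishes a.e. because `X ≤ M` a.e., so the infimum is attained
and equals `M`. -/

section

variable {α : Type*} [MeasurableSpace α] {μ : Measure α} {p : ℝ≥0∞}

theorem mul_measure_rpow_le_eLpNorm {E : Type*} [NormedAddCommGroup E] {f : α → E}
    (hf : AEStronglyMeasurable f μ) (hp0 : p ≠ 0) (hpt : p ≠ ∞) {a : ℝ≥0∞} {s : Set α}
    (hs : ∀ x ∈ s, a ≤ ‖f x‖ₑ) :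
    a * μ s ^ (1 / p.toReal) ≤ eLpNorm f p μ := by
  have hp : 0 < p.toReal := ENNReal.toReal_pos hp0 hpt
  have chebyshev : a ^ p.toReal * μ s ≤ eLpNorm f p μ ^ p.toReal :=
    (mul_le_mul_right (measure_mono hs) _).trans (mul_meas_ge_le_pow_eLpNorm' μ hp0 hpt hf a)
  rw [← ENNReal.rpow_le_rpow_iff hp, ENNReal.mul_rpow_of_nonneg _ _ hp.le,
    ← ENNReal.rpow_mul, one_div_mul_cancel hp.ne', ENNReal.rpow_one]
  exact chebyshev

theorem sub_mul_measure_rpow_le_eLpNorm_posPart {X : α → ℝ} {c M : ℝ} (hcM : c ≤ M)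
    (hg : MemLp (fun x => max (X x - c) 0) p μ) (hp0 : p ≠ 0) (hpt : p ≠ ∞) :
    (M - c) * (μ {x | X x = M}).toReal ^ (1 / p.toReal) ≤
      (eLpNorm (fun x => max (X x - c) 0) p μ).toReal := by
  have hbound : ∀ x ∈ {x | X x = M}, ENNReal.ofReal (M - c) ≤ ‖max (X x - c) 0‖ₑ := by
    rintro x (hx : X x = M)
    rw [hx, max_eq_left (sub_nonneg.2 hcM), Real.enorm_of_nonneg (sub_nonneg.2 hcM)]
  have h := ENNReal.toReal_mono hg.eLpNorm_ne_top
    (mul_measure_rpow_le_eLpNorm hg.aestronglyMeasurable hp0 hpt hbound)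
  rwa [ENNReal.toReal_mul, ENNReal.toReal_ofReal (sub_nonneg.2 hcM), ← ENNReal.toReal_rpow] at h

theorem le_inv_mul_eLpNorm_posPart_add [IsFiniteMeasure μ] {X : α → ℝ} (hX : MemLp X p μ)
    (hp0 : p ≠ 0) (hpt : p ≠ ∞) {M l : ℝ} (hl1 : l < 1)
    (hl : 1 - l ≤ (μ {x | X x = M}).toReal ^ (1 / p.toReal)) (c : ℝ) :
    M ≤ (1 - l)⁻¹ * (eLpNorm (fun x => max (X x - c) 0) p μ).toReal + c := by
  have hl1' : 0 < 1 - l := sub_pos.2 hl1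
  rcases le_total M c with hMc | hcM
  · have : 0 ≤ (1 - l)⁻¹ * (eLpNorm (fun x => max (X x - c) 0) p μ).toReal := by positivity
    linarith
  have hg : MemLp (fun x => max (X x - c) 0) p μ := (hX.sub (memLp_const c)).pos_part
  have key : (M - c) * (1 - l) ≤ (eLpNorm (fun x => max (X x - c) 0) p μ).toReal :=
    (mul_le_mul_of_nonneg_left hl (sub_nonneg.2 hcM)).trans
      (sub_mul_measure_rpow_le_eLpNorm_posPart hcM hg hp0 hpt)
  rw [← le_div_iff₀ hl1'] at key
  rw [inv_mul_eq_div]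
  linarith

theorem eLpNorm_posPart_sub_eq_zero {X : α → ℝ} {M : ℝ} (hXM : ∀ᵐ x ∂μ, X x ≤ M) :
    eLpNorm (fun x => max (X x - M) 0) p μ = 0 := by
  have hae : (fun x => max (X x - M) 0) =ᵐ[μ] 0 := by
    filter_upwards [hXM] with x hx
    exact max_eq_right (sub_nonpos.2 hx)
  rw [eLpNorm_congr_ae hae, eLpNorm_zero]

theorem ae_le_of_essSup_coe_eq {X : α → ℝ} {M : ℝ}
    (hM : essSup (fun x => (X x : EReal)) μ = M) : ∀ᵐ x ∂μ, X x ≤ M := by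
  filter_upwards [hM ▸ ae_le_essSup (μ := μ) (f := fun x => (X x : EReal))] with x hx
  exact EReal.coe_le_coe_iff.1 hx

end

theorem cvarLp_eq_esssup_on_tail_general {Ω : Type*} [MeasurableSpace Ω]
    (μ : Measure Ω) [IsProbabilityMeasure μ]
    (p : ℝ) (hp : 1 ≤ p) (X : Ω → ℝ) (hX : MemLp X (ENNReal.ofReal p) μ)
    (M : ℝ) (hM : essSup (fun ω => (X ω : EReal)) μ = (M : EReal)) :
    ∀ l : ℝ, 1 - (μ {ω | X ω = M}).toReal ^ (1 / p) ≤ l → l < 1 →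
      cvarLp (ENNReal.ofReal p) μ X l = M := by
  intro l hl hl1
  have hp0 : ENNReal.ofReal p ≠ 0 := (ENNReal.ofReal_pos.2 (by linarith)).ne'
  have hl' : 1 - l ≤ (μ {ω | X ω = M}).toReal ^ (1 / (ENNReal.ofReal p).toReal) := by
    rw [ENNReal.toReal_ofReal (by linarith)]
    linarith
  have hzero := eLpNorm_posPart_sub_eq_zero (p := ENNReal.ofReal p) (ae_le_of_essSup_coe_eq hM)
  refine IsLeast.csInf_eq ⟨⟨M, ?_⟩, ?_⟩
  · simp [hzero]
  · rintro _ ⟨c, rfl⟩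
    exact le_inv_mul_eLpNorm_posPart_add hX hp0 ofReal_ne_top hl1 hl' c

/-- If `P := P(X = esssup X) > 0` (in particular `esssup X = M < ∞`), then
`Q_p(X,λ) = esssup X` for all `λ ∈ [1 - P^{1/p}, 1)`. -/
theorem cvarLp_eq_esssup_on_tail {Ω : Type*} [MeasurableSpace Ω]
    (μ : Measure Ω) [IsProbabilityMeasure μ]
    (p : ℝ) (hp : 1 ≤ p) (X : Ω → ℝ) (hX : MemLp X (ENNReal.ofReal p) μ)
    (M : ℝ) (hM : essSup (fun ω => (X ω : EReal)) μ = (M : EReal))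
    (hP : 0 < (μ {ω | X ω = M}).toReal) :
    ∀ l : ℝ, 1 - (μ {ω | X ω = M}).toReal ^ (1 / p) ≤ l → l < 1 →
      cvarLp (ENNReal.ofReal p) μ X l = M :=
  cvarLp_eq_esssup_on_tail_general μ p hp X hX M hM
end

section
/- If esssup X = x and P(X = x) = P > 0, then inf_{c ≥ 0} ‖(c(X-x)+1)_+‖_p = P^{1/p}, with ‖(c(X-x)+1)_+‖_p → P^{1/p} as c → +∞; and if esssup X < x, the infimum is 0. -/
/-!
On `{X ≤ x}` the integrand `(c (X - x) + 1)_+` lies between the indicator of `{X = x}` and `1`,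
and tends to that indicator as `c → ∞`. Dominated convergence gives the limit `P(X = x)^{1/p}`,
which is then also the infimum over `c ≥ 0`. If `X < z < x` almost surely, the integrand already
vanishes almost surely at `c = 1 / (x - z)`.
-/

open MeasureTheory ENNReal Filter Topology

theorem tendsto_eLpNorm_of_dominated {ι Ω E : Type*} [NormedAddCommGroup E] {l : Filter ι}
    [l.IsCountablyGenerated] [MeasurableSpace Ω] {μ : Measure Ω} {p : ℝ≥0∞}
    (hp0 : p ≠ 0) (hp : p ≠ ∞) {F : ι → Ω → E} {f : Ω → E} (bound : Ω → ℝ)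
    (hF_meas : ∀ᶠ i in l, AEStronglyMeasurable (F i) μ)
    (h_bound : ∀ᶠ i in l, ∀ᵐ ω ∂μ, ‖F i ω‖ ≤ bound ω) (h_int : MemLp bound p μ)
    (h_lim : ∀ᵐ ω ∂μ, Tendsto (fun i => F i ω) l (𝓝 (f ω))) :
    Tendsto (fun i => eLpNorm (F i) p μ) l (𝓝 (eLpNorm f p μ)) := by
  simp_rw [eLpNorm_eq_lintegral_rpow_enorm_toReal hp0 hp]
  refine (ENNReal.continuous_rpow_const.tendsto _).comp <|
    tendsto_lintegral_filter_of_dominated_convergence' (fun ω => ‖bound ω‖ₑ ^ p.toReal)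
      ?_ ?_ ?_ ?_
  · filter_upwards [hF_meas] with i hi using hi.enorm.pow_const _
  · filter_upwards [h_bound] with i hi
    filter_upwards [hi] with ω hω
    gcongr
    exact enorm_le_iff_norm_le.mpr (hω.trans (Real.le_norm_self _))
  · exact (lintegral_rpow_enorm_lt_top_of_eLpNorm_lt_top hp0 hp h_int.eLpNorm_lt_top).ne
  · filter_upwards [h_lim] with ω hω
    exact ((continuous_enorm.tendsto _).comp hω).ennrpow_const _

theorem max_mul_add_one_eq_zero {c y : ℝ} (hy : y < 0) (hc : (-y)⁻¹ ≤ c) :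
    max (c * y + 1) 0 = 0 := by
  have : 1 ≤ c * -y := (inv_le_iff_one_le_mul₀ (neg_pos.2 hy)).mp hc
  exact max_eq_right (by linarith)

theorem tendsto_max_mul_add_one {y : ℝ} (hy : y ≤ 0) :
    Tendsto (fun c : ℝ => max (c * y + 1) 0) atTop (𝓝 (if y = 0 then 1 else 0)) := by
  rcases hy.eq_or_lt with rfl | hy
  · simp
  · rw [if_neg hy.ne]
    exact tendsto_const_nhds.congr' <|
      (eventually_ge_atTop _).mono fun c hc => (max_mul_add_one_eq_zero hy hc).symm

section BufferedNorm

variable {Ω : Type*} [MeasurableSpace Ω] {μ : Measure Ω} {p : ℝ≥0∞} {X : Ω → ℝ} {x : ℝ}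

theorem measure_eq_rpow_le_eLpNorm_max (hX : AEMeasurable X μ) (hp0 : p ≠ 0) (hp : p ≠ ∞)
    (c : ℝ) :
    μ {ω | X ω = x} ^ (1 / p.toReal) ≤ eLpNorm (fun ω => max (c * (X ω - x) + 1) 0) p μ := by
  have hs : NullMeasurableSet {ω | X ω = x} μ :=
    hX.nullMeasurableSet_preimage (measurableSet_singleton x)
  calc μ {ω | X ω = x} ^ (1 / p.toReal)
      = eLpNorm ({ω | X ω = x}.indicator fun _ => (1 : ℝ)) p μ := by
        simp [eLpNorm_indicator_const₀ hs hp0 hp]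
    _ ≤ eLpNorm (fun ω => max (c * (X ω - x) + 1) 0) p μ := by
        refine eLpNorm_mono_real fun ω => ?_
        by_cases h : X ω = x <;> simp [h]

theorem tendsto_eLpNorm_max_of_ae_le [IsFiniteMeasure μ] (hX : AEStronglyMeasurable X μ)
    (hXx : ∀ᵐ ω ∂μ, X ω ≤ x) (hp0 : p ≠ 0) (hp : p ≠ ∞) :
    Tendsto (fun c : ℝ => eLpNorm (fun ω => max (c * (X ω - x) + 1) 0) p μ) atTop
      (𝓝 (μ {ω | X ω = x} ^ (1 / p.toReal))) := by
  have hs : NullMeasurableSet {ω | X ω = x} μ :=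
    hX.aemeasurable.nullMeasurableSet_preimage (measurableSet_singleton x)
  have hind : μ {ω | X ω = x} ^ (1 / p.toReal) =
      eLpNorm ({ω | X ω = x}.indicator fun _ => (1 : ℝ)) p μ := by
    simp [eLpNorm_indicator_const₀ hs hp0 hp]
  rw [hind]
  refine tendsto_eLpNorm_of_dominated hp0 hp (fun _ => 1) ?_ ?_ (memLp_const 1) ?_
  · exact .of_forall fun c => by fun_prop
  · filter_upwards [eventually_ge_atTop 0] with c hc
    filter_upwards [hXx] with ω hω
    rw [Real.norm_of_nonneg (le_max_right _ _)]
    have := mul_nonpos_of_nonneg_of_nonpos hc (sub_nonpos.2 hω)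
    exact max_le (by linarith) zero_le_one
  · filter_upwards [hXx] with ω hω
    simpa [Set.indicator_apply, sub_eq_zero] using tendsto_max_mul_add_one (sub_nonpos.2 hω)

theorem iInf_eLpNorm_max_of_ae_le [IsFiniteMeasure μ] (hX : AEStronglyMeasurable X μ)
    (hXx : ∀ᵐ ω ∂μ, X ω ≤ x) (hp0 : p ≠ 0) (hp : p ≠ ∞) :
    ⨅ c ∈ Set.Ici (0 : ℝ), eLpNorm (fun ω => max (c * (X ω - x) + 1) 0) p μ =
      μ {ω | X ω = x} ^ (1 / p.toReal) := by
  refine le_antisymm ?_ <|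
    le_iInf₂ fun c _ => measure_eq_rpow_le_eLpNorm_max hX.aemeasurable hp0 hp c
  refine ge_of_tendsto (tendsto_eLpNorm_max_of_ae_le hX hXx hp0 hp) ?_
  filter_upwards [eventually_ge_atTop 0] with c hc using biInf_le _ hc

theorem eLpNorm_max_eq_zero_of_ae_lt {z : ℝ} (hzx : z < x) (hXz : ∀ᵐ ω ∂μ, X ω < z) :
    eLpNorm (fun ω => max ((x - z)⁻¹ * (X ω - x) + 1) 0) p μ = 0 := by
  refine (eLpNorm_congr_ae ?_).trans (eLpNorm_zero' (p := p) (μ := μ))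
  filter_upwards [hXz] with ω hω
  refine max_mul_add_one_eq_zero (by linarith) ?_
  rw [neg_sub]
  exact inv_anti₀ (by linarith) (by linarith)

theorem iInf_eLpNorm_max_of_ae_lt {z : ℝ} (hzx : z < x) (hXz : ∀ᵐ ω ∂μ, X ω < z) :
    ⨅ c ∈ Set.Ici (0 : ℝ), eLpNorm (fun ω => max (c * (X ω - x) + 1) 0) p μ = 0 :=
  nonpos_iff_eq_zero.1 <| (biInf_le _ (inv_nonneg.2 (sub_nonneg.2 hzx.le))).trans
    (eLpNorm_max_eq_zero_of_ae_lt hzx hXz).le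

end BufferedNorm

/-- If `esssup X = x` with `P := P(X = x) > 0`, then
`inf_{c ≥ 0} ‖(c(X-x)+1)_+‖_p = P^{1/p}` and `‖(c(X-x)+1)_+‖_p → P^{1/p}` as
`c → ∞`; and if `esssup X < x`, the infimum is `0`. -/
theorem bufferedProb_at_esssup {Ω : Type*} [MeasurableSpace Ω]
    (μ : Measure Ω) [IsProbabilityMeasure μ]
    (p : ℝ) (hp : 1 ≤ p) (X : Ω → ℝ) (hX : MemLp X (ENNReal.ofReal p) μ) (x : ℝ) :
    (essSup (fun ω => (X ω : EReal)) μ = (x : EReal) → 0 < μ {ω | X ω = x} →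
      ((⨅ c ∈ Set.Ici (0 : ℝ),
          eLpNorm (fun ω => max (c * (X ω - x) + 1) 0) (ENNReal.ofReal p) μ) =
        μ {ω | X ω = x} ^ (1 / p) ∧
      Tendsto
        (fun c : ℝ =>
          eLpNorm (fun ω => max (c * (X ω - x) + 1) 0) (ENNReal.ofReal p) μ)
        atTop (nhds (μ {ω | X ω = x} ^ (1 / p))))) ∧
    (essSup (fun ω => (X ω : EReal)) μ < (x : EReal) →
      (⨅ c ∈ Set.Ici (0 : ℝ),
        eLpNorm (fun ω => max (c * (X ω - x) + 1) 0) (ENNReal.ofReal p) μ) = 0) := by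
  have hp0 : ENNReal.ofReal p ≠ 0 := by simpa using zero_lt_one.trans_le hp
  have hpp : (ENNReal.ofReal p).toReal = p := ENNReal.toReal_ofReal (zero_le_one.trans hp)
  refine ⟨fun hess _ => ?_, fun hlt => ?_⟩
  · have hXx : ∀ᵐ ω ∂μ, X ω ≤ x := by
      filter_upwards [hess ▸ ae_le_essSup (f := fun ω => (X ω : EReal))] with ω hω
      exact_mod_cast hω
    simpa only [hpp] using And.intro (iInf_eLpNorm_max_of_ae_le hX.1 hXx hp0 ofReal_ne_top)
      (tendsto_eLpNorm_max_of_ae_le hX.1 hXx hp0 ofReal_ne_top)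
  · obtain ⟨z, hz, hzx⟩ := EReal.lt_iff_exists_real_btwn.1 hlt
    have hXz : ∀ᵐ ω ∂μ, X ω < z := by
      filter_upwards [ae_lt_of_essSup_lt hz] with ω hω
      exact_mod_cast hω
    exact iInf_eLpNorm_max_of_ae_lt (EReal.coe_lt_coe_iff.1 hzx) hXz
end
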